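/- Let p be a prime, n ≥ 1, and let x_1,…,x_n, y_1,…,y_n ∈ 𝔽_p and r ∈ 𝔽_p^* be such that for all i ≠ j the sets r[x_i,y_i] and r[x_j−1, y_j+1] are disjoint. Let x, y ∈ 𝔽_p with |[x,y]| ≥ 2 and set X := ⋃_{i=1}^n r[x_i,y_i]. Then |X + r[x,y]| ≥ min{p, |X| + |[x,y]| + n − 2}. -/

import Mathlib

open scoped Pointwise

/-- The interval `[x,y]` in `ZMod p`: `{x, x+1, …, x+i}` where `i ∈ {0,…,p-1}`
reduces to `y - x` mod `p`. -/
def itv {p : ℕ} (x y : ZMod p) : Finset (ZMod p) :=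
  (Finset.range ((y - x).val + 1)).image (fun i : ℕ => x + (i : ZMod p))

/-!
Scaling by `r` is a bijection of `𝔽_p` commuting with sums and translating by `u` changes no
cardinality, so we may take `r = 1` and `u = 0`; then `X + [0, b]` is the union of the intervals
`[x_i, y_i + b]`. If this union is all of `𝔽_p` we are done. Otherwise, reading `𝔽_p` as
`0, …, p - 1` starting from a point `z` outside the union turns every interval in sight into an
interval of integers. There the union contains `X`, the point just after each `[x_i, y_i]` but the
rightmost one, and the `b` points after the rightmost one; these pieces are disjoint because
`[x_i, y_i]` misses `[x_j - 1, y_j + 1]`.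
-/

open Finset

section Seg

variable {G : Type*} [AddCommMonoidWithOne G] [DecidableEq G]

def seg (c : G) (m : ℕ) : Finset G :=
  (range m).image fun i : ℕ => c + i

lemma add_mem_seg {c : G} {m k : ℕ} (hk : k < m) : c + k ∈ seg c m :=
  mem_image.2 ⟨k, mem_range.2 hk, rfl⟩

lemma seg_mono {c : G} {m m' : ℕ} (h : m ≤ m') : seg c m ⊆ seg c m' :=
  image_subset_image (range_subset_range.2 h)

lemma seg_add_seg {c d : G} {m l : ℕ} (hm : 1 ≤ m) (hl : 1 ≤ l) :
    seg c m + seg d l = seg (c + d) (m + l - 1) := by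
  ext w
  simp only [Finset.mem_add, seg, mem_image, mem_range]
  constructor
  · rintro ⟨_, ⟨i, hi, rfl⟩, _, ⟨j, hj, rfl⟩, rfl⟩
    exact ⟨i + j, by omega, by push_cast; abel⟩
  · rintro ⟨k, hk, rfl⟩
    refine ⟨_, ⟨min k (m - 1), by omega, rfl⟩, _, ⟨k - min k (m - 1), by omega, rfl⟩,
      ?_⟩
    rw [add_add_add_comm, ← Nat.cast_add, Nat.add_sub_of_le (min_le_left _ _)]

end Seg

section ZModSeg

variable {p : ℕ}

lemma itv_eq_seg (x y : ZMod p) : itv x y = seg x ((y - x).val + 1) := rfl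

lemma card_seg {c : ZMod p} {m : ℕ} (h : m ≤ p) : #(seg c m) = m := by
  rw [seg, card_image_of_injOn, card_range]
  intro i hi j hj hij
  have hv := congrArg ZMod.val (add_left_cancel hij)
  simp only [coe_range, Set.mem_Iio] at hi hj
  rwa [ZMod.val_cast_of_lt (hi.trans_le h), ZMod.val_cast_of_lt (hj.trans_le h)] at hv

lemma itv_eq_vadd_seg (u v : ZMod p) : itv u v = u +ᵥ seg (0 : ZMod p) ((v - u).val + 1) := by
  rw [itv, seg, vadd_finset_def, image_image]
  simp [Function.comp_def]

variable [NeZero p]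

lemma mem_seg {c w : ZMod p} {m : ℕ} : w ∈ seg c m ↔ (w - c).val < m := by
  refine ⟨?_, fun h => by simpa using add_mem_seg (c := c) h⟩
  simp only [seg, mem_image, mem_range]
  rintro ⟨i, hi, rfl⟩
  rw [add_sub_cancel_left, ZMod.val_natCast]
  exact (Nat.mod_le _ _).trans_lt hi

lemma seg_eq_univ {c : ZMod p} {m : ℕ} (h : p ≤ m) : seg c m = univ :=
  eq_univ_of_forall fun _ => mem_seg.2 ((ZMod.val_lt _).trans_le h)

lemma card_itv (x y : ZMod p) : #(itv x y) = (y - x).val + 1 :=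
  card_seg (ZMod.val_lt _)

lemma val_add_sub_of_notMem_seg {c z : ZMod p} {m k : ℕ} (hz : z ∉ seg c m) (hk : k < m) :
    (c + k - z).val = (c - z).val + k := by
  have hcast : ∀ j : ℕ, c + j - z = ((c - z).val + j : ℕ) := fun j => by
    push_cast [ZMod.natCast_zmod_val]; ring
  by_contra hne
  have hwrap : p - (c - z).val ≤ k := by
    by_contra hlt
    exact hne (by rw [hcast, ZMod.val_cast_of_lt (by omega)])
  apply hz
  have hz' : z = c + (p - (c - z).val : ℕ) := by
    rw [← sub_eq_zero, ← neg_sub, hcast, Nat.add_sub_of_le (ZMod.val_lt _).le,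
      ZMod.natCast_self, neg_zero]
  exact hz' ▸ add_mem_seg (by omega)

lemma image_val_sub_seg {c z : ZMod p} {m : ℕ} (hz : z ∉ seg c (m + 1)) :
    (seg c (m + 1)).image (fun w => (w - z).val) = Icc (c - z).val ((c - z).val + m) := by
  ext t
  simp only [seg, image_image, mem_image, mem_range, mem_Icc, Function.comp_def]
  constructor
  · rintro ⟨k, hk, rfl⟩
    rw [val_add_sub_of_notMem_seg hz hk]
    omega
  · rintro ⟨h₁, h₂⟩
    exact ⟨t - (c - z).val, by omega, by rw [val_add_sub_of_notMem_seg hz (by omega)]; omega⟩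

lemma itv_sub_one_add_one {x y : ZMod p} (h : (y - x).val + 2 < p) :
    itv (x - 1) (y + 1) = seg (x - 1) ((y - x).val + 3) := by
  have hcast : y + 1 - (x - 1) = ((y - x).val + 2 : ℕ) := by
    push_cast [ZMod.natCast_zmod_val]; ring
  rw [itv_eq_seg, hcast, ZMod.val_cast_of_lt h]

lemma itv_subset_itv_sub_one_add_one {x y : ZMod p} (h : (y - x).val + 2 < p) :
    itv x y ⊆ itv (x - 1) (y + 1) := by
  rw [itv_sub_one_add_one h]
  intro w hw
  obtain ⟨k, hk, rfl⟩ := mem_image.1 hw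
  rw [mem_range] at hk
  convert add_mem_seg (c := x - 1) (m := (y - x).val + 3) (k := k + 1) (by omega) using 1
  push_cast; ring

lemma add_one_mem_itv_sub_one_add_one {x y : ZMod p} (h : (y - x).val + 2 < p) :
    y + 1 ∈ itv (x - 1) (y + 1) := by
  rw [itv_sub_one_add_one h]
  convert add_mem_seg (c := x - 1) (m := (y - x).val + 3) (k := (y - x).val + 2) (by omega)
    using 1
  push_cast [ZMod.natCast_zmod_val]; ring

end ZModSeg

section Pointwise

variable {α ι : Type*} [DecidableEq α]

lemma biUnion_add [Add α] (s : Finset ι) (f : ι → Finset α) (t : Finset α) :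
    s.biUnion f + t = s.biUnion fun i => f i + t := by
  ext w
  simp only [mem_add, mem_biUnion]
  constructor
  · rintro ⟨a, ⟨i, hi, ha⟩, b, hb, rfl⟩
    exact ⟨i, hi, a, ha, b, hb, rfl⟩
  · rintro ⟨i, hi, a, ha, b, hb, rfl⟩
    exact ⟨a, ⟨i, hi, ha⟩, b, hb, rfl⟩

lemma smul_finset_biUnion {β : Type*} [SMul β α] (r : β) (s : Finset ι)
    (f : ι → Finset α) :
    r • s.biUnion f = s.biUnion fun i => r • f i :=
  biUnion_image

end Pointwise

theorem card_biUnion_Icc_add_le {ι : Type*} [Fintype ι] [Nonempty ι] (s a : ι → ℕ) {b : ℕ}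
    (hb : 1 ≤ b)
    (hdisj : ∀ i j, i ≠ j → Disjoint (Icc (s i) (s i + a i)) (Icc (s j) (s j + a j)))
    (hnext : ∀ i j, i ≠ j → s i + a i + 1 ∉ Icc (s j) (s j + a j)) :
    #(univ.biUnion fun i => Icc (s i) (s i + a i)) + (Fintype.card ι - 1) + b ≤
      #(univ.biUnion fun i => Icc (s i) (s i + a i + b)) := by
  classical
  have hend : Function.Injective fun i => s i + a i := fun i j hij => by
    by_contra hne
    exact disjoint_left.1 (hdisj i j hne) (right_mem_Icc.2 (by omega))
      (mem_Icc.2 ⟨by simp only at hij; omega, hij.le⟩)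
  obtain ⟨i₀, -, hi₀⟩ := exists_max_image univ (fun i => s i + a i) univ_nonempty
  set A := univ.biUnion fun i => Icc (s i) (s i + a i)
  set E := (univ.erase i₀).image fun j => s j + a j + 1
  set C := Icc (s i₀ + a i₀ + 1) (s i₀ + a i₀ + b)
  have hA : ∀ w ∈ A, w ≤ s i₀ + a i₀ := by
    simp only [A, mem_biUnion, mem_univ, true_and, mem_Icc]
    rintro w ⟨i, -, hw⟩
    exact hw.trans (hi₀ i (mem_univ i))
  have hE : ∀ w ∈ E, w ≤ s i₀ + a i₀ := by
    simp only [E, mem_image, mem_erase]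
    rintro _ ⟨j, ⟨hj, -⟩, rfl⟩
    exact lt_of_le_of_ne (hi₀ j (mem_univ j)) (hend.ne hj)
  have hAE : Disjoint A E := by
    simp only [A, E, disjoint_left, mem_biUnion, mem_univ, true_and, mem_image]
    rintro _ ⟨i, hi⟩ ⟨j, -, rfl⟩
    obtain rfl | hji := eq_or_ne j i
    · exact absurd (mem_Icc.1 hi).2 (by omega)
    · exact hnext j i hji hi
  have hAEC : Disjoint (A ∪ E) C :=
    disjoint_left.2 fun w hw hwC => by
      have := (mem_Icc.1 hwC).1
      rcases mem_union.1 hw with hw | hw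
      · have := hA w hw; omega
      · have := hE w hw; omega
  have hcardE : #E = Fintype.card ι - 1 := by
    have hinj : Function.Injective fun j => s j + a j + 1 := (add_left_injective 1).comp hend
    rw [card_image_of_injective _ hinj, card_erase_of_mem (mem_univ _), card_univ]
  have hsub : A ∪ E ∪ C ⊆ univ.biUnion fun i => Icc (s i) (s i + a i + b) := by
    simp only [A, E, C, subset_iff, mem_union, mem_biUnion, mem_univ, true_and, mem_image,
      mem_Icc]
    rintro w ((⟨i, hw⟩ | ⟨j, -, rfl⟩) | hw)
    · exact ⟨i, hw.1, by omega⟩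
    · exact ⟨j, by omega, by omega⟩
    · exact ⟨i₀, by omega, hw.2⟩
  calc #A + (Fintype.card ι - 1) + b = #(A ∪ E ∪ C) := by
        rw [card_union_of_disjoint hAEC, card_union_of_disjoint hAE, hcardE, Nat.card_Icc]
        omega
    _ ≤ _ := card_le_card hsub

section Sumset

variable {p : ℕ} [NeZero p] {ι : Type*} [Fintype ι] [Nonempty ι] {x y : ι → ZMod p}
  {b : ℕ}

theorem card_biUnion_itv_add_le_card_biUnion_seg (hb : 1 ≤ b) {z : ZMod p}
    (hz : ∀ i, z ∉ seg (x i) ((y i - x i).val + b + 1))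
    (hdisj : ∀ i j, i ≠ j → Disjoint (itv (x i) (y i)) (itv (x j) (y j)))
    (hnext : ∀ i j, i ≠ j → y i + 1 ∉ itv (x j) (y j)) :
    #(univ.biUnion fun i => itv (x i) (y i)) + (Fintype.card ι - 1) + b ≤
      #(univ.biUnion fun i => seg (x i) ((y i - x i).val + b + 1)) := by
  set φ : ZMod p → ℕ := fun w => (w - z).val
  have hφ : Function.Injective φ := fun w w' h => sub_left_injective (ZMod.val_injective p h)
  set s : ι → ℕ := fun i => (x i - z).val
  set a : ι → ℕ := fun i => (y i - x i).val
  have hX : ∀ i, (itv (x i) (y i)).image φ = Icc (s i) (s i + a i) := fun i =>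
    image_val_sub_seg fun h => hz i (seg_mono (by omega) h)
  have hY : ∀ i, (seg (x i) (a i + b + 1)).image φ = Icc (s i) (s i + a i + b) := fun i => by
    rw [image_val_sub_seg (hz i), add_assoc]
  have hφnext : ∀ i, φ (y i + 1) = s i + a i + 1 := fun i => by
    have hy : y i + 1 = x i + ((a i + 1 : ℕ) : ZMod p) := by
      push_cast [a, ZMod.natCast_zmod_val]; ring
    simp only [φ, hy, val_add_sub_of_notMem_seg (hz i) (by omega : a i + 1 < a i + b + 1)]
    ring
  have key := card_biUnion_Icc_add_le s a hb
    (fun i j hij => by rw [← hX, ← hX]; exact (disjoint_image hφ).2 (hdisj i j hij))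
    (fun i j hij => by rw [← hφnext, ← hX, hφ.mem_finset_image]; exact hnext i j hij)
  simpa only [← hX, ← hY, ← biUnion_image, card_image_of_injective _ hφ] using key

theorem min_le_card_biUnion_itv_add_seg
    (hdisj : ∀ i j, i ≠ j → Disjoint (itv (x i) (y i)) (itv (x j - 1) (y j + 1)))
    (hb : 1 ≤ b) :
    min p (#(univ.biUnion fun i => itv (x i) (y i)) + (Fintype.card ι - 1) + b) ≤
      #((univ.biUnion fun i => itv (x i) (y i)) + seg 0 (b + 1)) := by
  have hsum : (univ.biUnion fun i => itv (x i) (y i)) + seg 0 (b + 1) =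
      univ.biUnion fun i => seg (x i) ((y i - x i).val + b + 1) := by
    rw [biUnion_add]
    refine biUnion_congr rfl fun i _ => ?_
    rw [itv_eq_seg, seg_add_seg (by omega) (by omega), add_zero]
    congr 1
    omega
  rw [hsum]
  by_cases hcover : ∀ z, z ∈ univ.biUnion fun i => seg (x i) ((y i - x i).val + b + 1)
  · rw [eq_univ_of_forall hcover, card_univ, ZMod.card]
    exact min_le_left _ _
  push Not at hcover
  obtain ⟨z, hz⟩ := hcover
  simp only [mem_biUnion, mem_univ, true_and, not_exists] at hz
  have hlt : ∀ i, (y i - x i).val + b + 1 < p := fun i => by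
    by_contra h
    exact hz i (seg_eq_univ (not_lt.1 h) ▸ mem_univ z)
  refine (min_le_right _ _).trans (card_biUnion_itv_add_le_card_biUnion_seg hb hz ?_ ?_)
  · exact fun i j hij => (hdisj i j hij).mono_right
      (itv_subset_itv_sub_one_add_one (by have := hlt j; omega))
  · exact fun i j hij h => disjoint_left.1 (hdisj j i hij.symm) h
      (add_one_mem_itv_sub_one_add_one (by have := hlt i; omega))

end Sumset

theorem stmt_5 (p n : ℕ) (hp : p.Prime) (hn : 1 ≤ n)
    (x y : Fin n → ZMod p) (r : ZMod p) (hr : r ≠ 0)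
    (hdisj : ∀ i j, i ≠ j → Disjoint (r • itv (x i) (y i)) (r • itv (x j - 1) (y j + 1)))
    (u v : ZMod p) (huv : 2 ≤ (itv u v).card) :
    min p ((Finset.univ.biUnion fun i => r • itv (x i) (y i)).card + (itv u v).card + n - 2)
      ≤ ((Finset.univ.biUnion fun i => r • itv (x i) (y i)) + r • itv u v).card := by
  have : Fact p.Prime := ⟨hp⟩
  have : Nonempty (Fin n) := ⟨⟨0, hn⟩⟩
  rw [card_itv] at huv ⊢
  rw [← smul_finset_biUnion, ← smul_add, card_smul_finset₀ hr, card_smul_finset₀ hr,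
    itv_eq_vadd_seg u v, add_vadd_comm, card_vadd_finset]
  have key := min_le_card_biUnion_itv_add_seg (fun i j hij => (hdisj i j hij).of_image_finset)
    (b := (v - u).val) (by omega)
  rw [Fintype.card_fin] at key
  convert key using 2
  omega
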